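/- Let τ be an M-topology on M : X → ℕ and let A : X → ℕ be a sub-M-set of M. Then bd(bd(bd(A))) = bd(bd(A)), i.e., bd(bd(bd(A)))(x) = bd(bd(A))(x) for every x ∈ X. -/

import Mathlib

/-- M-complement of a sub-M-set: `Aᶜ = M ⊖ A` (pointwise truncated subtraction). -/
def mcompl {X : Type*} (M A : X → ℕ) : X → ℕ := fun x => M x - A x

/-- `τ` is an M-topology on the multiset `M : X → ℕ`. -/
structure IsMTopology {X : Type*} (M : X → ℕ) (τ : Set (X → ℕ)) : Prop where
  le_of_mem : ∀ N ∈ τ, N ≤ M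
  top_mem : M ∈ τ
  zero_mem : (0 : X → ℕ) ∈ τ
  sSup_mem : ∀ S ⊆ τ, (fun x => sSup {n | ∃ N ∈ S, N x = n}) ∈ τ
  min_mem : ∀ U ∈ τ, ∀ V ∈ τ, (fun x => min (U x) (V x)) ∈ τ

/-- Interior: pointwise supremum of all open `G ∈ τ` with `G ≤ A`. -/
noncomputable def mint {X : Type*} (τ : Set (X → ℕ)) (A : X → ℕ) : X → ℕ :=
  fun x => sSup {n | ∃ G ∈ τ, G ≤ A ∧ G x = n}

/-- Closure: pointwise infimum of all closed `K` with `A ≤ K ≤ M`. -/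
noncomputable def mcl {X : Type*} (M : X → ℕ) (τ : Set (X → ℕ)) (A : X → ℕ) : X → ℕ :=
  fun x => sInf {n | ∃ K, mcompl M K ∈ τ ∧ A ≤ K ∧ K ≤ M ∧ K x = n}

/-- Exterior: interior of the M-complement. -/
noncomputable def mext {X : Type*} (M : X → ℕ) (τ : Set (X → ℕ)) (A : X → ℕ) : X → ℕ :=
  mint τ (mcompl M A)

/-- Boundary: `bd(A) = cl(A) ∩ cl(Aᶜ)` (pointwise min). -/
noncomputable def mbd {X : Type*} (M : X → ℕ) (τ : Set (X → ℕ)) (A : X → ℕ) : X → ℕ :=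
  fun x => min (mcl M τ A x) (mcl M τ (mcompl M A) x)

/-!
The boundary of any sub-M-set is closed, so it suffices to show `bd (bd K) = bd K` for a closed
`K`. Then `C := bd K = K ∩ cl Kᶜ` is closed, lies below `K` and below `(int K)ᶜ ⊇ cl Kᶜ`. Every
open `G ≤ C` is therefore below `int K`, hence `C ≤ Gᶜ`; applied to the complements `G` of the
closed supersets of `Cᶜ` this gives `C ≤ cl Cᶜ`. Hence `bd C = cl C ∩ cl Cᶜ = C ∩ cl Cᶜ = C`.
-/

section

variable {X : Type*} {M : X → ℕ} {τ : Set (X → ℕ)}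

lemma mcompl_le (M A : X → ℕ) : mcompl M A ≤ M := fun _ => Nat.sub_le _ _

lemma mcompl_mcompl {A : X → ℕ} (hA : A ≤ M) : mcompl M (mcompl M A) = A :=
  funext fun x => Nat.sub_sub_self (hA x)

namespace IsMTopology

lemma mcompl_self_mem (hτ : IsMTopology M τ) : mcompl M M ∈ τ := by
  convert hτ.zero_mem
  exact funext fun x => Nat.sub_self (M x)

lemma mcompl_zero_mem (hτ : IsMTopology M τ) : mcompl M 0 ∈ τ :=
  hτ.top_mem

lemma mem_of_isGreatest (hτ : IsMTopology M τ) {S : Set (X → ℕ)} (hS : S ⊆ τ) {f : X → ℕ}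
    (hf : ∀ x, IsGreatest {n | ∃ N ∈ S, N x = n} (f x)) : f ∈ τ := by
  convert hτ.sSup_mem S hS with x
  exact (hf x).csSup_eq.symm

lemma max_mem (hτ : IsMTopology M τ) {U V : X → ℕ} (hU : U ∈ τ) (hV : V ∈ τ) :
    (fun x => max (U x) (V x)) ∈ τ := by
  refine hτ.mem_of_isGreatest (S := {U, V}) (Set.pair_subset hU hV) fun x => ⟨?_, ?_⟩
  · rcases le_total (U x) (V x) with h | h
    · exact ⟨V, Or.inr rfl, (max_eq_right h).symm⟩
    · exact ⟨U, Or.inl rfl, (max_eq_left h).symm⟩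
  · rintro _ ⟨N, hN | hN, rfl⟩ <;> subst hN <;> simp

end IsMTopology

lemma mint_le (A : X → ℕ) : mint τ A ≤ A := fun x =>
  csSup_le' (by rintro _ ⟨G, -, hGA, rfl⟩; exact hGA x)

lemma le_mint {G A : X → ℕ} (hG : G ∈ τ) (hGA : G ≤ A) : G ≤ mint τ A := fun x =>
  le_csSup ⟨A x, by rintro _ ⟨G, -, hGA, rfl⟩; exact hGA x⟩ ⟨G, hG, hGA, rfl⟩

lemma mint_le_M (hτ : IsMTopology M τ) (A : X → ℕ) : mint τ A ≤ M := fun x =>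
  csSup_le' (by rintro _ ⟨G, hG, -, rfl⟩; exact hτ.le_of_mem G hG x)

lemma mint_mem (hτ : IsMTopology M τ) (A : X → ℕ) : mint τ A ∈ τ := by
  refine hτ.mem_of_isGreatest (S := {G | G ∈ τ ∧ G ≤ A}) (fun _ hG => hG.1) fun x => ⟨?_, ?_⟩
  · obtain ⟨G, hG, hGA, hGx⟩ :=
      Nat.sSup_mem (s := {n | ∃ G ∈ τ, G ≤ A ∧ G x = n})
        ⟨0, 0, hτ.zero_mem, fun _ => Nat.zero_le _, rfl⟩
        ⟨A x, by rintro _ ⟨G, -, hGA, rfl⟩; exact hGA x⟩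
    exact ⟨G, ⟨hG, hGA⟩, hGx⟩
  · rintro _ ⟨G, ⟨hG, hGA⟩, rfl⟩
    exact le_mint hG hGA x

lemma mcl_le {A K : X → ℕ} (hK : mcompl M K ∈ τ) (hAK : A ≤ K) (hKM : K ≤ M) :
    mcl M τ A ≤ K := fun _ => csInf_le (OrderBot.bddBelow _) ⟨K, hK, hAK, hKM, rfl⟩

lemma le_mcl (hτ : IsMTopology M τ) {A : X → ℕ} (hA : A ≤ M) : A ≤ mcl M τ A := fun x =>
  le_csInf ⟨M x, M, hτ.mcompl_self_mem, hA, le_rfl, rfl⟩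
    (by rintro _ ⟨K, -, hAK, -, rfl⟩; exact hAK x)

lemma mcl_eq_self (hτ : IsMTopology M τ) {K : X → ℕ} (hK : mcompl M K ∈ τ) (hKM : K ≤ M) :
    mcl M τ K = K :=
  le_antisymm (mcl_le hK le_rfl hKM) (le_mcl hτ hKM)

lemma mcl_eq_zero {A : X → ℕ} (hA : ¬A ≤ M) : mcl M τ A = 0 := by
  funext x
  refine (congrArg sInf ?_).trans Nat.sInf_empty
  refine Set.eq_empty_of_forall_notMem ?_
  rintro _ ⟨K, -, hAK, hKM, -⟩
  exact hA (hAK.trans hKM)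

/-- `M ⊖ cl A` is the largest value of `M ⊖ K` over the closed `K ≥ A`; if there is no such `K`,
`cl A` is the junk value `0`, which is closed as well. -/
lemma mcompl_mcl_mem (hτ : IsMTopology M τ) (A : X → ℕ) : mcompl M (mcl M τ A) ∈ τ := by
  by_cases hA : A ≤ M
  swap
  · rw [mcl_eq_zero hA]
    exact hτ.mcompl_zero_mem
  refine hτ.mem_of_isGreatest
    (S := {G | ∃ K, mcompl M K ∈ τ ∧ A ≤ K ∧ K ≤ M ∧ G = mcompl M K})
    (by rintro _ ⟨K, hK, -, -, rfl⟩; exact hK) fun x => ⟨?_, ?_⟩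
  · obtain ⟨K, hK, hAK, hKM, hKx⟩ :=
      Nat.sInf_mem (s := {n | ∃ K, mcompl M K ∈ τ ∧ A ≤ K ∧ K ≤ M ∧ K x = n})
        ⟨M x, M, hτ.mcompl_self_mem, hA, le_rfl, rfl⟩
    exact ⟨mcompl M K, ⟨K, hK, hAK, hKM, rfl⟩, by simp only [mcompl, mcl, hKx]⟩
  · rintro _ ⟨_, ⟨K, hK, hAK, hKM, rfl⟩, rfl⟩
    exact Nat.sub_le_sub_left (mcl_le hK hAK hKM x) _

lemma mcl_mcompl_le_mcompl_mint (hτ : IsMTopology M τ) (A : X → ℕ) :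
    mcl M τ (mcompl M A) ≤ mcompl M (mint τ A) :=
  mcl_le (by rw [mcompl_mcompl (mint_le_M hτ A)]; exact mint_mem hτ A)
    (fun x => Nat.sub_le_sub_left (mint_le A x) _) (mcompl_le _ _)

lemma le_mcl_mcompl (hτ : IsMTopology M τ) {C K : X → ℕ} (hCK : C ≤ K)
    (hC : C ≤ mcompl M (mint τ K)) : C ≤ mcl M τ (mcompl M C) := fun x => by
  refine le_csInf ⟨M x, M, hτ.mcompl_self_mem, mcompl_le M C, le_rfl, rfl⟩ ?_
  rintro _ ⟨L, hL, hCL, hLM, rfl⟩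
  have hLC : mcompl M L ≤ C := fun y => by
    have := hCL y
    simp only [mcompl] at this ⊢
    omega
  calc C x ≤ M x - mint τ K x := hC x
    _ ≤ M x - (M x - L x) := Nat.sub_le_sub_left (le_mint hL (hLC.trans hCK) x) _
    _ = L x := Nat.sub_sub_self (hLM x)

lemma mcompl_mbd_mem (hτ : IsMTopology M τ) (A : X → ℕ) : mcompl M (mbd M τ A) ∈ τ := by
  convert hτ.max_mem (mcompl_mcl_mem hτ A) (mcompl_mcl_mem hτ (mcompl M A)) using 1
  funext x
  simp only [mcompl, mbd]
  omega

lemma mbd_le_M (hτ : IsMTopology M τ) (A : X → ℕ) : mbd M τ A ≤ M := fun x =>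
  (min_le_right _ _).trans (mcl_le hτ.mcompl_self_mem (mcompl_le M A) le_rfl x)

lemma mbd_mbd_of_closed (hτ : IsMTopology M τ) {K : X → ℕ} (hK : mcompl M K ∈ τ)
    (hKM : K ≤ M) : mbd M τ (mbd M τ K) = mbd M τ K := by
  set C := mbd M τ K
  have hCK : C ≤ K := fun x => by
    simpa only [C, mbd, mcl_eq_self hτ hK hKM] using min_le_left _ _
  have hC : C ≤ mcompl M (mint τ K) := fun x =>
    (min_le_right _ _).trans (mcl_mcompl_le_mcompl_mint hτ K x)
  funext x
  change min (mcl M τ C x) _ = C x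
  rw [mcl_eq_self hτ (mcompl_mbd_mem hτ K) (mbd_le_M hτ K)]
  exact min_eq_left (le_mcl_mcompl hτ hCK hC x)

end

theorem bd_bd_bd_eq_bd_bd_general {X : Type*} (M : X → ℕ) (τ : Set (X → ℕ))
    (hτ : IsMTopology M τ) (A : X → ℕ) :
    ∀ x, mbd M τ (mbd M τ (mbd M τ A)) x = mbd M τ (mbd M τ A) x :=
  congrFun (mbd_mbd_of_closed hτ (mcompl_mbd_mem hτ A) (mbd_le_M hτ A))

theorem bd_bd_bd_eq_bd_bd {X : Type*} (M : X → ℕ) (τ : Set (X → ℕ))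
    (hτ : IsMTopology M τ) (A : X → ℕ) (hA : A ≤ M) :
    ∀ x, mbd M τ (mbd M τ (mbd M τ A)) x = mbd M τ (mbd M τ A) x :=
  bd_bd_bd_eq_bd_bd_general M τ hτ A
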